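/- (Selberg's identity for Kloosterman sums) For integers z and positive integer q, S(z, z; q) = Σ_{d | gcd(z, q)} d · S(z²/d², 1; q/d), where S(a,b;c) = Σ_{y mod c, gcd(y,c)=1} e((ay + b·y⁻¹)/c). -/

import Mathlib

open Finset

/-- `e(t) = exp(2πit)`. -/
noncomputable def eC (t : ℝ) : ℂ := Complex.exp (2 * Real.pi * Complex.I * t)

/-- Kloosterman sum `S(a,b;c) = Σ_{y mod c, (y,c)=1} e((ay + b y⁻¹)/c)`,
where `y⁻¹` is the inverse of `y` mod `c`. -/
noncomputable def kloos (a b : ℤ) (c : ℕ) : ℂ :=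
  ∑ y ∈ (Finset.range c).filter (fun y => Nat.Coprime y c),
    eC ((((a * y + b * ((((y : ZMod c)⁻¹ : ZMod c)).val : ℤ)) : ℤ) : ℝ) / c)

lemma eC_add (s t : ℝ) : eC (s + t) = eC s * eC t := by
  simp [eC, mul_add, Complex.exp_add]

lemma eC_zero : eC 0 = 1 := by simp [eC]

lemma eC_int (n : ℤ) : eC n = 1 := by
  simpa [eC, mul_comm, mul_assoc, mul_left_comm] using Complex.exp_int_mul_two_pi_mul_I n

lemma eC_eq_one_iff {t : ℝ} : eC t = 1 ↔ ∃ n : ℤ, t = n := by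
  constructor
  · intro h
    rw [eC, Complex.exp_eq_one_iff] at h
    obtain ⟨n, hn⟩ := h
    refine ⟨n, ?_⟩
    have h2 : (2 * Real.pi * Complex.I) ≠ 0 := by
      simp [Real.pi_ne_zero, Complex.I_ne_zero]
    have : (t : ℂ) = n := by
      apply mul_left_cancel₀ h2
      rw [hn]; ring
    exact_mod_cast this
  · rintro ⟨n, rfl⟩; exact eC_int n

lemma eC_congr {c : ℕ} (hc : c ≠ 0) {m n : ℤ} (h : (c : ℤ) ∣ m - n) :
    eC ((m : ℝ) / c) = eC ((n : ℝ) / c) := by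
  obtain ⟨k, hk⟩ := h
  have hm : (m : ℝ) = n + c * k := by
    have : (m : ℝ) - n = c * k := by exact_mod_cast congrArg (Int.cast : ℤ → ℝ) hk
    linarith
  have hc' : (c : ℝ) ≠ 0 := Nat.cast_ne_zero.mpr hc
  rw [hm]
  rw [show ((n : ℝ) + c * k) / c = n / c + k by field_simp]
  rw [eC_add, eC_int, mul_one]

noncomputable def psiz (c : ℕ) (x : ZMod c) : ℂ := eC ((x.val : ℝ) / c)

lemma psiz_intCast (c : ℕ) [NeZero c] (n : ℤ) : psiz c ((n : ZMod c)) = eC ((n : ℝ) / c) := by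
  apply eC_congr (NeZero.ne c)
  have : ((((n : ZMod c).val : ℤ) : ZMod c)) = (n : ZMod c) := by
    simp [ZMod.natCast_val, ZMod.intCast_cast, ZMod.cast_id]
  rwa [← sub_eq_zero, ← Int.cast_sub, ZMod.intCast_zmod_eq_zero_iff_dvd] at this

lemma psiz_natCast (c : ℕ) [NeZero c] (n : ℕ) : psiz c ((n : ZMod c)) = eC ((n : ℝ) / c) := by
  have := psiz_intCast c (n : ℤ)
  simpa using this

lemma psiz_add (c : ℕ) [NeZero c] (x y : ZMod c) :
    psiz c (x + y) = psiz c x * psiz c y := by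
  have hx : x = (((x.val : ℤ)) : ZMod c) := by simp [ZMod.natCast_val, ZMod.intCast_cast, ZMod.cast_id]
  have hy : y = (((y.val : ℤ)) : ZMod c) := by simp [ZMod.natCast_val, ZMod.intCast_cast, ZMod.cast_id]
  rw [hx, hy, ← Int.cast_add, psiz_intCast, psiz_intCast, psiz_intCast]
  push_cast
  rw [add_div, eC_add]

lemma psiz_zero (c : ℕ) [NeZero c] : psiz c 0 = 1 := by
  simp [psiz, ZMod.val_zero, eC_zero]

lemma psiz_eq_one_iff (c : ℕ) [NeZero c] (x : ZMod c) : psiz c x = 1 ↔ x = 0 := by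
  constructor
  · intro h
    rw [psiz, eC_eq_one_iff] at h
    obtain ⟨n, hn⟩ := h
    have hc : 0 < (c : ℝ) := by exact_mod_cast Nat.pos_of_ne_zero (NeZero.ne c)
    have h0 : (0 : ℝ) ≤ (x.val : ℝ) / c := by positivity
    have h1 : (x.val : ℝ) / c < 1 := by
      rw [div_lt_one hc]
      exact_mod_cast ZMod.val_lt x
    rw [hn] at h0 h1
    have hn0 : n = 0 := by
      have : (0:ℤ) ≤ n := by exact_mod_cast h0
      have : n < 1 := by exact_mod_cast h1
      omega
    rw [hn0] at hn
    have : (x.val : ℝ) = 0 := by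
      field_simp at hn
      simpa using hn
    have : x.val = 0 := by exact_mod_cast this
    exact (ZMod.val_eq_zero x).mp this
  · rintro rfl; exact psiz_zero c

lemma psiz_orth (c : ℕ) [NeZero c] (w : ZMod c) :
    ∑ v : ZMod c, psiz c (v * w) = if w = 0 then (c : ℂ) else 0 := by
  split_ifs with hw
  · subst hw
    simp [psiz_zero, ZMod.card c]
  · have key : psiz c w * (∑ v : ZMod c, psiz c (v * w)) = ∑ v : ZMod c, psiz c (v * w) := by
      rw [Finset.mul_sum]
      refine Fintype.sum_bijective (fun v => v + 1) (Equiv.addRight (1 : ZMod c)).bijective _ _ ?_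
      intro v
      rw [← psiz_add, add_mul, one_mul, add_comm (v * w) w]
    have hne : psiz c w ≠ 1 := fun h => hw ((psiz_eq_one_iff c w).mp h)
    have h2 : (psiz c w - 1) * (∑ v : ZMod c, psiz c (v * w)) = 0 := by
      rw [sub_mul, one_mul, key, sub_self]
    rcases mul_eq_zero.mp h2 with h | h
    · exact absurd (by linear_combination h : psiz c w = 1) hne
    · exact h

lemma kloos_eq_sum_units (a b : ℤ) (c : ℕ) [NeZero c] :
    kloos a b c = ∑ u : (ZMod c)ˣ,
      psiz c ((a : ZMod c) * (u : ZMod c) + (b : ZMod c) * ((u⁻¹ : (ZMod c)ˣ) : ZMod c)) := by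
  rw [kloos]
  refine Finset.sum_bij' (fun y hy => ZMod.unitOfCoprime y (Finset.mem_filter.mp hy).2)
    (fun (u : (ZMod c)ˣ) _ => (u : ZMod c).val) ?_ ?_ ?_ ?_ ?_
  · intro y hy; exact Finset.mem_univ _
  · intro u _
    rw [Finset.mem_filter, Finset.mem_range]
    exact ⟨ZMod.val_lt _, ZMod.val_coe_unit_coprime u⟩
  · intro y hy
    have h2 := (Finset.mem_filter.mp hy).1
    simp only [ZMod.coe_unitOfCoprime, ZMod.natCast_val, ZMod.cast_id]
    exact (ZMod.val_cast_of_lt (Finset.mem_range.mp h2)).symm ▸ rfl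
  · intro u _
    ext
    simp [ZMod.coe_unitOfCoprime, ZMod.natCast_val, ZMod.cast_id]
  · intro y hy
    have hcop := (Finset.mem_filter.mp hy).2
    beta_reduce
    rw [← psiz_intCast]
    congr 1
    push_cast
    congr 2
    rw [ZMod.natCast_val, ZMod.cast_id, ← ZMod.inv_coe_unit, ZMod.coe_unitOfCoprime]

lemma kloos_normal_form (z : ℤ) (q : ℕ) [NeZero q] :
    kloos z z q = ∑ t : ZMod q,
      ∑ u ∈ Finset.univ.filter (fun u : ZMod q => t * u = -(z : ZMod q)),
        psiz q ((z : ZMod q) * u - t) := by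
  set Z : ZMod q := (z : ZMod q) with hZ
  set D : ℂ := ∑ t : ZMod q, ∑ u : ZMod q, ∑ v : ZMod q,
    psiz q (t * (u * v - 1) + (Z * u + Z * v)) with hD
  have hq0 : (q : ℂ) ≠ 0 := Nat.cast_ne_zero.mpr (NeZero.ne q)
  -- Evaluation A : D = q * kloos z z q
  have hA : D = (q : ℂ) * kloos z z q := by
    rw [hD]
    rw [Finset.sum_comm]
    have h1 : ∀ u : ZMod q, ∑ t : ZMod q, ∑ v : ZMod q,
        psiz q (t * (u * v - 1) + (Z * u + Z * v))
        = ∑ v : ZMod q, (if u * v = 1 then (q:ℂ) else 0) * psiz q (Z * u + Z * v) := by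
      intro u
      rw [Finset.sum_comm]
      refine Finset.sum_congr rfl (fun v _ => ?_)
      calc ∑ t : ZMod q, psiz q (t * (u * v - 1) + (Z * u + Z * v))
          = ∑ t : ZMod q, psiz q (t * (u * v - 1)) * psiz q (Z * u + Z * v) :=
            Finset.sum_congr rfl (fun t _ => psiz_add q _ _)
        _ = (∑ t : ZMod q, psiz q (t * (u * v - 1))) * psiz q (Z * u + Z * v) :=
            (Finset.sum_mul _ _ _).symm
        _ = (if u * v - 1 = 0 then (q:ℂ) else 0) * psiz q (Z * u + Z * v) := by
            rw [psiz_orth]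
        _ = (if u * v = 1 then (q:ℂ) else 0) * psiz q (Z * u + Z * v) := by
            simp only [sub_eq_zero]
    calc (∑ u : ZMod q, ∑ t : ZMod q, ∑ v : ZMod q,
            psiz q (t * (u * v - 1) + (Z * u + Z * v)))
        = ∑ u : ZMod q, ∑ v : ZMod q,
            (if u * v = 1 then (q:ℂ) else 0) * psiz q (Z * u + Z * v) :=
          Finset.sum_congr rfl (fun u _ => h1 u)
      _ = ∑ p ∈ (Finset.univ ×ˢ Finset.univ : Finset (ZMod q × ZMod q)),
            (if p.1 * p.2 = 1 then (q:ℂ) else 0) * psiz q (Z * p.1 + Z * p.2) := by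
          rw [Finset.sum_product]
      _ = ∑ p ∈ (Finset.univ ×ˢ Finset.univ : Finset (ZMod q × ZMod q)),
            (if p.1 * p.2 = 1 then (q:ℂ) * psiz q (Z * p.1 + Z * p.2) else 0) := by
          refine Finset.sum_congr rfl (fun p _ => ?_)
          split_ifs <;> simp
      _ = ∑ p ∈ (Finset.univ ×ˢ Finset.univ : Finset (ZMod q × ZMod q)).filter
            (fun p => p.1 * p.2 = 1), (q:ℂ) * psiz q (Z * p.1 + Z * p.2) :=
          (Finset.sum_filter _ _).symm
      _ = ∑ u : (ZMod q)ˣ, (q:ℂ) * psiz q (Z * (u : ZMod q) + Z * ((u⁻¹ : (ZMod q)ˣ) : ZMod q)) := by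
          refine Finset.sum_bij' (fun p hp => Units.mkOfMulEqOne p.1 p.2
              (Finset.mem_filter.mp hp).2)
            (fun u _ => ((u : ZMod q), ((u⁻¹ : (ZMod q)ˣ) : ZMod q))) ?_ ?_ ?_ ?_ ?_
          · intro p hp; exact Finset.mem_univ _
          · intro u _
            refine Finset.mem_filter.mpr ⟨Finset.mem_product.mpr ⟨Finset.mem_univ _, Finset.mem_univ _⟩, ?_⟩
            exact u.mul_inv
          · intro p hp; rfl
          · intro u _; rfl
          · intro p hp; rfl
      _ = (q : ℂ) * kloos z z q := by
          rw [← Finset.mul_sum, kloos_eq_sum_units]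
  -- Evaluation B
  have hB : D = (q : ℂ) * ∑ t : ZMod q,
      ∑ u ∈ Finset.univ.filter (fun u : ZMod q => t * u = -Z), psiz q (Z * u - t) := by
    rw [hD, Finset.mul_sum]
    refine Finset.sum_congr rfl (fun t _ => ?_)
    have h2 : ∀ u : ZMod q, ∑ v : ZMod q, psiz q (t * (u * v - 1) + (Z * u + Z * v))
        = (if t * u = -Z then (q:ℂ) else 0) * psiz q (Z * u - t) := by
      intro u
      calc ∑ v : ZMod q, psiz q (t * (u * v - 1) + (Z * u + Z * v))
          = ∑ v : ZMod q, psiz q (v * (t * u + Z)) * psiz q (Z * u - t) := by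
            refine Finset.sum_congr rfl (fun v _ => ?_)
            rw [← psiz_add]
            congr 1
            ring
        _ = (∑ v : ZMod q, psiz q (v * (t * u + Z))) * psiz q (Z * u - t) :=
            (Finset.sum_mul _ _ _).symm
        _ = (if t * u + Z = 0 then (q:ℂ) else 0) * psiz q (Z * u - t) := by rw [psiz_orth]
        _ = (if t * u = -Z then (q:ℂ) else 0) * psiz q (Z * u - t) := by
            simp only [add_eq_zero_iff_eq_neg]
    calc (∑ u : ZMod q, ∑ v : ZMod q, psiz q (t * (u * v - 1) + (Z * u + Z * v)))
        = ∑ u : ZMod q, (if t * u = -Z then (q:ℂ) else 0) * psiz q (Z * u - t) :=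
          Finset.sum_congr rfl (fun u _ => h2 u)
      _ = ∑ u : ZMod q, (if t * u = -Z then (q:ℂ) * psiz q (Z * u - t) else 0) := by
          refine Finset.sum_congr rfl (fun u _ => ?_)
          split_ifs <;> simp
      _ = ∑ u ∈ Finset.univ.filter (fun u : ZMod q => t * u = -Z),
            (q:ℂ) * psiz q (Z * u - t) := (Finset.sum_filter _ _).symm
      _ = (q:ℂ) * ∑ u ∈ Finset.univ.filter (fun u : ZMod q => t * u = -Z),
            psiz q (Z * u - t) := (Finset.mul_sum _ _ _).symm
  exact mul_left_cancel₀ hq0 (hA.symm.trans hB)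

lemma sum_zmod_gcd_partition (q : ℕ) [NeZero q] (F : ZMod q → ℂ) :
    ∑ t : ZMod q, F t =
      ∑ h ∈ q.divisors, ∑ m ∈ (Finset.range (q / h)).filter
        (fun m => m.Coprime (q / h)), F (((h * m : ℕ) : ZMod q)) := by
  have hq : q ≠ 0 := NeZero.ne q
  -- (a) sum over ZMod q = sum over range q
  have ha : ∑ t : ZMod q, F t = ∑ n ∈ Finset.range q, F ((n : ZMod q)) := by
    refine Finset.sum_bij' (fun t _ => t.val) (fun n _ => ((n : ZMod q))) ?_ ?_ ?_ ?_ ?_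
    · intro t _; exact Finset.mem_range.mpr (ZMod.val_lt t)
    · intro n _; exact Finset.mem_univ _
    · intro t _; simp [ZMod.natCast_val, ZMod.cast_id]
    · intro n hn; exact ZMod.val_cast_of_lt (Finset.mem_range.mp hn)
    · intro t _; rw [ZMod.natCast_val, ZMod.cast_id]
  rw [ha]
  -- (b) fiberwise over gcd
  rw [← Finset.sum_fiberwise_of_maps_to (g := fun n => Nat.gcd n q)
    (fun n _ => Nat.mem_divisors.mpr ⟨Nat.gcd_dvd_right n q, hq⟩)]
  -- (c) reindex each fiber
  refine Finset.sum_congr rfl (fun h hh => ?_)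
  obtain ⟨hdvd, -⟩ := Nat.mem_divisors.mp hh
  have hhpos : 0 < h := Nat.pos_of_mem_divisors hh
  obtain ⟨c, hc⟩ := hdvd
  have hcq : q / h = c := by rw [hc, Nat.mul_div_cancel_left _ hhpos]
  have hcpos : 0 < c := by
    rcases Nat.eq_zero_or_pos c with h0 | h0
    · exact absurd (by rw [hc, h0, mul_zero]) hq
    · exact h0
  refine Finset.sum_bij' (fun n _ => n / h) (fun m _ => h * m) ?_ ?_ ?_ ?_ ?_
  · intro n hn
    obtain ⟨hn1, hn2⟩ := Finset.mem_filter.mp hn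
    have hhn : h ∣ n := hn2 ▸ Nat.gcd_dvd_left n q
    obtain ⟨m, hm⟩ := hhn
    beta_reduce
    rw [hm, Nat.mul_div_cancel_left _ hhpos]
    refine Finset.mem_filter.mpr ⟨Finset.mem_range.mpr ?_, ?_⟩
    · rw [hcq]
      have : h * m < h * c := by rw [← hm, ← hc]; exact Finset.mem_range.mp hn1
      exact lt_of_mul_lt_mul_left this (Nat.zero_le h)
    · rw [hcq]
      have : Nat.gcd (h * m) (h * c) = h := by rw [← hm, ← hc]; exact hn2
      rw [Nat.gcd_mul_left] at this
      exact (Nat.mul_eq_left hhpos.ne').mp this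
  · intro m hm
    obtain ⟨hm1, hm2⟩ := Finset.mem_filter.mp hm
    beta_reduce
    refine Finset.mem_filter.mpr ⟨Finset.mem_range.mpr ?_, ?_⟩
    · rw [hc]
      have : m < c := by rw [← hcq]; exact Finset.mem_range.mp hm1
      exact Nat.mul_lt_mul_of_le_of_lt (le_refl h) this hhpos
    · rw [hc, Nat.gcd_mul_left]
      rw [hcq] at hm2
      rw [hm2, mul_one]
  · intro n hn
    obtain ⟨hn1, hn2⟩ := Finset.mem_filter.mp hn
    have hhn : h ∣ n := hn2 ▸ Nat.gcd_dvd_left n q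
    exact Nat.mul_div_cancel' hhn
  · intro m _; exact Nat.mul_div_cancel_left _ hhpos
  · intro n hn
    obtain ⟨hn1, hn2⟩ := Finset.mem_filter.mp hn
    have hhn : h ∣ n := hn2 ▸ Nat.gcd_dvd_left n q
    rw [Nat.mul_div_cancel' hhn]

lemma filter_vanish (z : ℤ) (q h m : ℕ) [NeZero q] (hdvd : h ∣ q) (hndz : ¬ (h:ℤ) ∣ z) :
    Finset.univ.filter
      (fun u : ZMod q => ((h*m : ℕ) : ZMod q) * u = -(z : ZMod q)) = ∅ := by
  rw [Finset.filter_eq_empty_iff]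
  intro u _
  intro heq
  apply hndz
  have h2 := congrArg (ZMod.castHom hdvd (ZMod h)) heq
  rw [map_mul, map_neg, map_intCast, map_natCast] at h2
  have h3 : ((h * m : ℕ) : ZMod h) = 0 := by
    push_cast
    rw [ZMod.natCast_self, zero_mul]
  rw [h3, zero_mul] at h2
  have h4 : ((z : ℤ) : ZMod h) = 0 := by
    rw [← neg_eq_zero, ← h2]
  exact (ZMod.intCast_zmod_eq_zero_iff_dvd z h).mp h4

lemma inner_sum_eval (z : ℤ) (q h c m : ℕ) [NeZero q] (hqhc : q = h * c)
    (hh : 0 < h) (hc : 0 < c) (hdz : (h:ℤ) ∣ z) (hcop : m.Coprime c) :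
    ∑ u ∈ Finset.univ.filter
        (fun u : ZMod q => ((h*m : ℕ) : ZMod q) * u = -(z : ZMod q)),
      psiz q ((z : ZMod q) * u - ((h*m : ℕ) : ZMod q))
    = (h : ℂ) * eC (((-((z/(h:ℤ))^2 * ((((m : ZMod c))⁻¹).val : ℤ) + (m:ℤ)) : ℤ) : ℝ) / c) := by
  have hq0 : q ≠ 0 := NeZero.ne q
  set A : ℤ := z / (h:ℤ) with hA
  have hzA : z = (h:ℤ) * A := (Int.mul_ediv_cancel' hdz).symm
  set Mb : ℕ := (((m : ZMod c))⁻¹).val with hMb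
  have hcz : NeZero c := ⟨hc.ne'⟩
  have hmMb : (c:ℤ) ∣ ((m:ℤ) * Mb - 1) := by
    have h1 : ((m : ZMod c)) * ((m : ZMod c))⁻¹ = 1 := ZMod.coe_mul_inv_eq_one m hcop
    have h2 : (((m:ℤ) * Mb - 1 : ℤ) : ZMod c) = 0 := by
      push_cast
      rw [ZMod.natCast_val, ZMod.cast_id, h1, sub_self]
    exact (ZMod.intCast_zmod_eq_zero_iff_dvd _ c).mp h2
  obtain ⟨w, hw⟩ := hmMb
  have hqz : (q : ℤ) = (h:ℤ) * c := by exact_mod_cast hqhc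
  -- solution set description
  have hset : Finset.univ.filter
      (fun u : ZMod q => ((h*m : ℕ) : ZMod q) * u = -(z : ZMod q))
      = (Finset.range h).image (fun k : ℕ => (((-(A * Mb) + (k:ℤ) * c : ℤ)) : ZMod q)) := by
    ext u
    simp only [Finset.mem_filter, Finset.mem_univ, true_and, Finset.mem_image,
      Finset.mem_range]
    constructor
    · intro hu
      have hUu : (((u.val : ℤ)) : ZMod q) = u := by
        simp [ZMod.natCast_val, ZMod.cast_id]
      set U : ℤ := (u.val : ℤ) with hU
      have h1 : (((h:ℤ) * m * U : ℤ) : ZMod q) = ((-z : ℤ) : ZMod q) := by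
        push_cast
        push_cast at hu
        rw [hUu]
        exact hu
      have h2 : (q:ℤ) ∣ ((h:ℤ) * m * U - (-z)) := by
        have := (ZMod.intCast_eq_intCast_iff _ _ _).mp h1
        exact Int.ModEq.dvd this.symm
      obtain ⟨t, ht⟩ := h2
      rw [hqz] at ht
      have h3 : (m:ℤ) * U + A = (c:ℤ) * t := by
        have hh0 : (h:ℤ) ≠ 0 := by exact_mod_cast hh.ne'
        apply mul_left_cancel₀ hh0
        calc (h:ℤ) * ((m:ℤ) * U + A) = (h:ℤ) * m * U - (-z) := by rw [hzA]; ring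
          _ = (h:ℤ) * c * t := ht
          _ = (h:ℤ) * ((c:ℤ) * t) := by ring
      have h4 : U + A * Mb = (c:ℤ) * (-U * w + Mb * t) := by
        linear_combination (-(U:ℤ)) * hw + (Mb:ℤ) * h3
      refine ⟨(( (-U * w + Mb * t) % (h:ℤ)).toNat), ?_, ?_⟩
      · have hpos : (0:ℤ) < (h:ℤ) := by exact_mod_cast hh
        have := Int.emod_lt_of_pos (-U * w + Mb * t) hpos
        have h0 := Int.emod_nonneg (-U * w + Mb * t) hpos.ne'
        omega
      · set j : ℤ := -U * w + Mb * t with hj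
        have hpos : (0:ℤ) < (h:ℤ) := by exact_mod_cast hh
        have h0 := Int.emod_nonneg j hpos.ne'
        have hkc : ((j % (h:ℤ)).toNat : ℤ) = j % (h:ℤ) := Int.toNat_of_nonneg h0
        rw [← hUu]
        rw [ZMod.intCast_eq_intCast_iff]
        apply Int.ModEq.symm
        apply Int.modEq_iff_dvd.mpr
        refine ⟨-(j / (h:ℤ)), ?_⟩
        rw [hqz, hkc]
        have hmod : j % (h:ℤ) = j - (h:ℤ) * (j / (h:ℤ)) := Int.emod_def j (h:ℤ)
        linear_combination (-(1:ℤ)) * h4 + (c:ℤ) * hmod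
    · rintro ⟨k, hk, rfl⟩
      have key : (q:ℤ) ∣ ((h:ℤ) * m * (-(A * Mb) + (k:ℤ) * c) - (-z)) := by
        refine ⟨A * (-w) + m * k, ?_⟩
        rw [hqz]
        have hw' : (m:ℤ) * Mb = 1 + c * w := by linarith [hw]
        calc (h:ℤ) * m * (-(A * Mb) + (k:ℤ) * c) - (-z)
            = (h:ℤ) * (A * (1 - (m:ℤ) * Mb) + (m:ℤ) * k * c) := by rw [hzA]; ring
          _ = (h:ℤ) * c * (A * (-w) + m * k) := by rw [hw']; ring
      have : ((( (h:ℤ) * m * (-(A * Mb) + (k:ℤ) * c)) : ℤ) : ZMod q)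
          = ((-z : ℤ) : ZMod q) := by
        rw [ZMod.intCast_eq_intCast_iff]
        exact Int.ModEq.symm (Int.modEq_iff_dvd.mpr key)
      push_cast at this ⊢
      linear_combination this
  rw [hset]
  rw [Finset.sum_image ?hinj]
  case hinj =>
    intro k1 hk1 k2 hk2 heq
    have hd : (q:ℤ) ∣ ((-(A * Mb) + (k1:ℤ) * c) - (-(A * Mb) + (k2:ℤ) * c)) := by
      have := (ZMod.intCast_eq_intCast_iff _ _ _).mp heq
      exact Int.ModEq.dvd this.symm
    obtain ⟨t, ht⟩ := hd
    rw [hqz] at ht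
    have hc0 : (c:ℤ) ≠ 0 := by exact_mod_cast hc.ne'
    have h5 : (k1:ℤ) - k2 = (h:ℤ) * t := by
      apply mul_left_cancel₀ hc0
      calc (c:ℤ) * ((k1:ℤ) - k2) = (-(A * Mb) + (k1:ℤ) * c) - (-(A * Mb) + (k2:ℤ) * c) := by ring
        _ = (h:ℤ) * c * t := ht
        _ = (c:ℤ) * ((h:ℤ) * t) := by ring
    have hdd : (h:ℤ) ∣ ((k1:ℤ) - k2) := ⟨t, h5⟩
    have hlt1 := Finset.mem_range.mp hk1
    have hlt2 := Finset.mem_range.mp hk2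
    have := Int.eq_zero_of_dvd_of_natAbs_lt_natAbs hdd ?_
    · omega
    · simp only [Int.natAbs_natCast]
      omega
  have hterm : ∀ k ∈ Finset.range h,
      psiz q ((z : ZMod q) * (((-(A * Mb) + (k:ℤ) * c : ℤ)) : ZMod q) - ((h*m : ℕ) : ZMod q))
      = eC (((-(A^2 * (Mb:ℤ) + (m:ℤ)) : ℤ) : ℝ) / c) := by
    intro k hk
    have harg : (z : ZMod q) * (((-(A * Mb) + (k:ℤ) * c : ℤ)) : ZMod q) - ((h*m : ℕ) : ZMod q)
        = (((z * (-(A * Mb) + (k:ℤ) * c) - (h:ℤ) * m : ℤ)) : ZMod q) := by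
      push_cast
      ring
    rw [harg, psiz_intCast]
    have hnum : z * (-(A * Mb) + (k:ℤ) * c) - (h:ℤ) * m
        = (h:ℤ) * (-(A^2 * Mb) + A * k * c - m) := by rw [hzA]; ring
    rw [hnum]
    have hdiv : (((h:ℤ) * (-(A^2 * Mb) + A * k * c - m) : ℤ) : ℝ) / (q:ℝ)
        = (((-(A^2 * Mb) + A * k * c - m : ℤ)) : ℝ) / (c:ℝ) := by
      have hh0 : ((h:ℝ)) ≠ 0 := by exact_mod_cast hh.ne'
      rw [hqhc]
      push_cast
      rw [mul_div_mul_left _ _ hh0]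
    rw [hdiv]
    apply eC_congr hc.ne'
    refine ⟨A * k, by ring⟩
  rw [Finset.sum_congr rfl hterm, Finset.sum_const, Finset.card_range, nsmul_eq_mul]

lemma sum_coprime_eq_sum_units (c : ℕ) [NeZero c] (f : ZMod c → ℂ) :
    ∑ m ∈ (Finset.range c).filter (fun m => m.Coprime c), f ((m : ZMod c))
      = ∑ u : (ZMod c)ˣ, f ((u : ZMod c)) := by
  refine Finset.sum_bij' (fun y hy => ZMod.unitOfCoprime y (Finset.mem_filter.mp hy).2)
    (fun (u : (ZMod c)ˣ) _ => (u : ZMod c).val) ?_ ?_ ?_ ?_ ?_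
  · intro y hy; exact Finset.mem_univ _
  · intro u _
    rw [Finset.mem_filter, Finset.mem_range]
    exact ⟨ZMod.val_lt _, ZMod.val_coe_unit_coprime u⟩
  · intro y hy
    have h2 := (Finset.mem_filter.mp hy).1
    simp only [ZMod.coe_unitOfCoprime]
    exact ZMod.val_cast_of_lt (Finset.mem_range.mp h2)
  · intro u _
    ext
    simp [ZMod.coe_unitOfCoprime, ZMod.natCast_val, ZMod.cast_id]
  · intro y hy
    beta_reduce
    rw [ZMod.coe_unitOfCoprime]

lemma neg_inv_unit_inv (c : ℕ) (u : (ZMod c)ˣ) : (-(u⁻¹ : (ZMod c)ˣ))⁻¹ = -u := by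
  apply inv_eq_of_mul_eq_one_right
  rw [neg_mul_neg, inv_mul_cancel]

lemma coprime_sum_eq_kloos (A : ℤ) (c : ℕ) [NeZero c] :
    ∑ m ∈ (Finset.range c).filter (fun m => m.Coprime c),
      eC (((-(A^2 * ((((m : ZMod c))⁻¹).val : ℤ) + (m:ℤ)) : ℤ) : ℝ) / c)
      = kloos (A^2) 1 c := by
  have hterm : ∀ m ∈ (Finset.range c).filter (fun m => m.Coprime c),
      eC (((-(A^2 * ((((m : ZMod c))⁻¹).val : ℤ) + (m:ℤ)) : ℤ) : ℝ) / c)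
      = psiz c (-((A : ZMod c)^2 * ((m : ZMod c))⁻¹ + (m : ZMod c))) := by
    intro m hm
    rw [← psiz_intCast]
    congr 1
    push_cast
    rw [ZMod.natCast_val, ZMod.cast_id]
  rw [Finset.sum_congr rfl hterm]
  rw [sum_coprime_eq_sum_units c (fun x => psiz c (-((A : ZMod c)^2 * x⁻¹ + x)))]
  have hbij : Function.Bijective (fun u : (ZMod c)ˣ => -u⁻¹) := by
    have hinv : Function.Involutive (fun u : (ZMod c)ˣ => -u⁻¹) := by
      intro u
      beta_reduce
      rw [neg_inv_unit_inv, neg_neg]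
    exact hinv.bijective
  rw [kloos_eq_sum_units]
  refine Fintype.sum_bijective _ hbij _ _ (fun u => ?_)
  beta_reduce
  congr 1
  rw [ZMod.inv_coe_unit, neg_inv_unit_inv]
  push_cast
  ring

theorem selberg_identity (z : ℤ) (q : ℕ) (hq : 0 < q) :
    kloos z z q =
      ∑ d ∈ (Nat.gcd z.natAbs q).divisors,
        (d : ℂ) * kloos ((z / (d : ℤ)) ^ 2) 1 (q / d) := by
  haveI : NeZero q := ⟨hq.ne'⟩
  rw [kloos_normal_form z q]
  rw [sum_zmod_gcd_partition q (fun t => ∑ u ∈ Finset.univ.filter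
      (fun u : ZMod q => t * u = -(z : ZMod q)), psiz q ((z : ZMod q) * u - t))]
  have hgcd0 : Nat.gcd z.natAbs q ≠ 0 := fun h0 => hq.ne' (Nat.eq_zero_of_gcd_eq_zero_right h0)
  have hgsub : (Nat.gcd z.natAbs q).divisors ⊆ q.divisors :=
    Nat.divisors_subset_of_dvd hq.ne' (Nat.gcd_dvd_right _ _)
  rw [← Finset.sum_subset hgsub ?vanish]
  case vanish =>
    intro h hhq hhg
    have hdvd : h ∣ q := (Nat.mem_divisors.mp hhq).1
    have hndz : ¬ (h:ℤ) ∣ z := by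
      intro hd
      apply hhg
      refine Nat.mem_divisors.mpr ⟨Nat.dvd_gcd ?_ hdvd, hgcd0⟩
      exact Int.natCast_dvd.mp hd
    refine Finset.sum_eq_zero (fun m hm => ?_)
    rw [filter_vanish z q h m hdvd hndz, Finset.sum_empty]
  refine Finset.sum_congr rfl (fun h hh => ?_)
  have hdg : h ∣ Nat.gcd z.natAbs q := (Nat.mem_divisors.mp hh).1
  have hdvd : h ∣ q := hdg.trans (Nat.gcd_dvd_right _ _)
  have hdz : (h:ℤ) ∣ z := Int.natCast_dvd.mpr (hdg.trans (Nat.gcd_dvd_left _ _))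
  have hhpos : 0 < h := Nat.pos_of_mem_divisors hh
  have hcpos : 0 < q / h := Nat.div_pos (Nat.le_of_dvd hq hdvd) hhpos
  haveI : NeZero (q / h) := ⟨hcpos.ne'⟩
  have hqhc : q = h * (q / h) := (Nat.mul_div_cancel' hdvd).symm
  calc (∑ m ∈ (Finset.range (q / h)).filter (fun m => m.Coprime (q / h)),
          ∑ u ∈ Finset.univ.filter
            (fun u : ZMod q => ((h * m : ℕ) : ZMod q) * u = -(z : ZMod q)),
            psiz q ((z : ZMod q) * u - ((h * m : ℕ) : ZMod q)))
      = ∑ m ∈ (Finset.range (q / h)).filter (fun m => m.Coprime (q / h)),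
          (h : ℂ) * eC (((-((z/(h:ℤ))^2 *
            ((((m : ZMod (q / h)))⁻¹).val : ℤ) + (m:ℤ)) : ℤ) : ℝ) / (q / h : ℕ)) := by
        refine Finset.sum_congr rfl (fun m hm => ?_)
        exact inner_sum_eval z q h (q / h) m hqhc hhpos hcpos hdz
          (Finset.mem_filter.mp hm).2
    _ = (h : ℂ) * kloos ((z / (h : ℤ))^2) 1 (q / h) := by
        rw [← Finset.mul_sum]
        rw [coprime_sum_eq_kloos (z / (h:ℤ)) (q / h)]
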